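/- arXiv:2604.26759 — 4 statements merged into one kernel-verified Lean document; each statement's English description precedes it below -/
import Mathlib

section
/- Let M, H ∈ ℝ^{n×n} be symmetric, m, h ∈ ℝⁿ, γ ∈ ℝ, and define f(u) = uᵀMu + 2mᵀu + γ and g(u) = uᵀHu + 2hᵀu. Suppose there exist λ* ∈ ℝ and u* ∈ ℝⁿ such that M + λ*H is positive definite, (M + λ*H)u* = −(m + λ*h), and g(u*) = 0. Then u* is a global minimizer of f over the feasible set {u ∈ ℝⁿ : g(u) = 0}, i.e., f(u*) ≤ f(u) for all u with g(u) = 0. (Exactness of the GTRS solution obtained from the KKT conditions.) -/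
open Matrix

/-!
Writing `A = M + λ*H` and `b = m + λ*h`, the Lagrangian `f + λ*g` is the quadratic
`uᵀAu + 2bᵀu + γ`, and stationarity `A u* = -b` lets us complete the square:
`(f + λ*g)(u) - (f + λ*g)(u*) = (u - u*)ᵀA(u - u*) ≥ 0`. On the feasible set `g` vanishes, so
the same difference is `f(u) - f(u*)`.
-/

namespace Matrix

variable {ι R : Type*} [Fintype ι] [CommRing R]

def quadratic (A : Matrix ι ι R) (b u : ι → R) : R :=
  u ⬝ᵥ (A *ᵥ u) + 2 * (b ⬝ᵥ u)

theorem quadratic_add_smul (A B : Matrix ι ι R) (a b : ι → R) (c : R) (u : ι → R) :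
    quadratic (A + c • B) (a + c • b) u = quadratic A a u + c * quadratic B b u := by
  simp only [quadratic, add_mulVec, smul_mulVec, dotProduct_add, dotProduct_smul,
    add_dotProduct, smul_dotProduct, smul_eq_mul]
  ring

theorem IsSymm.quadratic_sub_quadratic {A : Matrix ι ι R} (hA : A.IsSymm) {b x₀ : ι → R}
    (hx₀ : A *ᵥ x₀ = -b) (u : ι → R) :
    quadratic A b u - quadratic A b x₀ = (u - x₀) ⬝ᵥ (A *ᵥ (u - x₀)) := by
  have hcross : x₀ ⬝ᵥ (A *ᵥ u) = u ⬝ᵥ (A *ᵥ x₀) := by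
    rw [dotProduct_mulVec, ← mulVec_transpose, hA.eq, dotProduct_comm]
  simp only [quadratic, mulVec_sub, dotProduct_sub, sub_dotProduct, hcross, hx₀,
    dotProduct_neg, dotProduct_comm _ b]
  ring

theorem PosSemidef.quadratic_le [PartialOrder R] [StarRing R] [TrivialStar R]
    [IsOrderedAddMonoid R] {A : Matrix ι ι R} (hA : A.PosSemidef) {b x₀ : ι → R}
    (hx₀ : A *ᵥ x₀ = -b) (u : ι → R) :
    quadratic A b x₀ ≤ quadratic A b u := by
  have hsymm : A.IsSymm := isHermitian_iff_isSymm.mp hA.isHermitian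
  have hnonneg := hA.dotProduct_mulVec_nonneg (u - x₀)
  rw [star_trivial, ← hsymm.quadratic_sub_quadratic hx₀] at hnonneg
  exact sub_nonneg.mp hnonneg

end Matrix

theorem stmt6_general {n : ℕ} (M H : Matrix (Fin n) (Fin n) ℝ)
    (m h : Fin n → ℝ) (γ : ℝ) (lam : ℝ) (ustar : Fin n → ℝ)
    (hPD : (M + lam • H).PosDef)
    (hstat : (M + lam • H) *ᵥ ustar = -(m + lam • h))
    (hfeas : ustar ⬝ᵥ (H *ᵥ ustar) + 2 * (h ⬝ᵥ ustar) = 0) :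
    ∀ u : Fin n → ℝ, u ⬝ᵥ (H *ᵥ u) + 2 * (h ⬝ᵥ u) = 0 →
      ustar ⬝ᵥ (M *ᵥ ustar) + 2 * (m ⬝ᵥ ustar) + γ ≤
        u ⬝ᵥ (M *ᵥ u) + 2 * (m ⬝ᵥ u) + γ := by
  intro u hu
  have hlagrangian := hPD.posSemidef.quadratic_le hstat u
  rw [quadratic_add_smul, quadratic_add_smul] at hlagrangian
  simp only [quadratic, hu, hfeas, mul_zero, add_zero] at hlagrangian
  linarith

/-- Exactness of the GTRS solution obtained from the KKT conditions: if `M + λ*H` is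
positive definite, `(M + λ*H) u* = −(m + λ*h)` (stationarity), and `g(u*) = 0`
(feasibility), then `u*` globally minimizes `f(u) = uᵀMu + 2mᵀu + γ` over the feasible set
`{u : g(u) = uᵀHu + 2hᵀu = 0}`. -/
theorem stmt6 {n : ℕ} (M H : Matrix (Fin n) (Fin n) ℝ)
    (hMsymm : M.IsSymm) (hHsymm : H.IsSymm)
    (m h : Fin n → ℝ) (γ : ℝ) (lam : ℝ) (ustar : Fin n → ℝ)
    (hPD : (M + lam • H).PosDef)
    (hstat : (M + lam • H) *ᵥ ustar = -(m + lam • h))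
    (hfeas : ustar ⬝ᵥ (H *ᵥ ustar) + 2 * (h ⬝ᵥ ustar) = 0) :
    ∀ u : Fin n → ℝ, u ⬝ᵥ (H *ᵥ u) + 2 * (h ⬝ᵥ u) = 0 →
      ustar ⬝ᵥ (M *ᵥ ustar) + 2 * (m ⬝ᵥ ustar) + γ ≤
        u ⬝ᵥ (M *ᵥ u) + 2 * (m ⬝ᵥ u) + γ :=
  stmt6_general M H m h γ lam ustar hPD hstat hfeas
end

section
/- Let M, H ∈ ℝ^{n×n} with H symmetric, m, h ∈ ℝⁿ, u(λ) = −(M + λH)⁻¹(m + λh), and φ(λ) = u(λ)ᵀH u(λ) + 2hᵀu(λ). If M + λ₀H is invertible, then φ is differentiable at λ₀ with φ′(λ₀) = −2 (H u(λ₀) + h)ᵀ (M + λ₀H)⁻¹ (H u(λ₀) + h). In particular, if M + λ₀H is in addition symmetric positive definite, then φ′(λ₀) ≤ 0. -/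
/-!
Write `A(λ) = M + λH`. Differentiating `A(λ) u(λ) = -(m + λh)` gives
`u' = -A⁻¹ (H u + h)`. Since `H` is symmetric, the derivative of the quadratic
`g(u) = uᵀHu + 2hᵀu` along the curve is `2 (Hu + h)ᵀ u'`, hence
`φ' = -2 (Hu + h)ᵀ A⁻¹ (Hu + h)`, which is `≤ 0` when `A` (and so `A⁻¹`) is positive definite.
-/

open Matrix

section

variable {𝕜 : Type*} [NontriviallyNormedField 𝕜] {m n : Type*} [Fintype n]

theorem HasDerivAt.dotProduct {v w : 𝕜 → n → 𝕜} {v' w' : n → 𝕜} {t : 𝕜}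
    (hv : HasDerivAt v v' t) (hw : HasDerivAt w w' t) :
    HasDerivAt (fun s ↦ v s ⬝ᵥ w s) (v' ⬝ᵥ w t + v t ⬝ᵥ w') t := by
  simp only [_root_.dotProduct, ← Finset.sum_add_distrib]
  exact HasDerivAt.fun_sum fun i _ ↦ (hasDerivAt_pi.1 hv i).mul (hasDerivAt_pi.1 hw i)

-- `HasDerivAt` depends only on the topology of `Matrix n n 𝕜`, so the statements below do not
-- depend on which matrix norm a proof opens locally.
open scoped Matrix.Norms.Elementwise in
theorem HasDerivAt.matrix_mulVec {A : 𝕜 → Matrix m n 𝕜} {A' : Matrix m n 𝕜}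
    {v : 𝕜 → n → 𝕜} {v' : n → 𝕜} {t : 𝕜} (hA : HasDerivAt A A' t) (hv : HasDerivAt v v' t) :
    HasDerivAt (fun s ↦ A s *ᵥ v s) (A' *ᵥ v t + A t *ᵥ v') t :=
  hasDerivAt_pi.2 fun i ↦ (hasDerivAt_pi.1 hA i).dotProduct hv

open scoped Matrix.Norms.Elementwise in
theorem HasDerivAt.dotProduct_mulVec_add_two_mul_dotProduct {H : Matrix n n 𝕜} (hH : H.IsSymm)
    (h : n → 𝕜) {u : 𝕜 → n → 𝕜} {u' : n → 𝕜} {t : 𝕜} (hu : HasDerivAt u u' t) :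
    HasDerivAt (fun s ↦ u s ⬝ᵥ (H *ᵥ u s) + 2 * (h ⬝ᵥ u s))
      (2 * ((H *ᵥ u t + h) ⬝ᵥ u')) t := by
  have hHu := (hasDerivAt_const t H).matrix_mulVec hu
  have hsymm : u t ⬝ᵥ (H *ᵥ u') = (H *ᵥ u t) ⬝ᵥ u' := by
    rw [dotProduct_mulVec, ← mulVec_transpose, hH, dotProduct_comm]
  refine ((hu.dotProduct hHu).fun_add
    (((hasDerivAt_const t h).dotProduct hu).const_mul 2)).congr_deriv ?_
  rw [zero_mulVec, zero_add, zero_dotProduct, zero_add, hsymm, dotProduct_comm u', add_dotProduct]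
  ring

open scoped Matrix.Norms.Operator in
theorem Matrix.hasDerivAt_inv [CompleteSpace 𝕜] [DecidableEq n]
    {A : 𝕜 → Matrix n n 𝕜} {A' : Matrix n n 𝕜} {t : 𝕜} (hA : HasDerivAt A A' t)
    (ht : IsUnit (A t).det) :
    HasDerivAt (fun s ↦ (A s)⁻¹) (-((A t)⁻¹ * A' * (A t)⁻¹)) t := by
  obtain ⟨x, hx⟩ := (isUnit_iff_isUnit_det _).2 ht
  -- instance search does not reach completeness through the operator-norm structure
  have : HasSummableGeomSeries (Matrix n n 𝕜) :=
    @instHasSummableGeomSeriesOfCompleteSpace _ _ (FiniteDimensional.complete 𝕜 _)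
  have hinv := hasFDerivAt_ringInverse (𝕜 := 𝕜) x
  rw [hx] at hinv
  have := hinv.comp_hasDerivAt t hA
  simp only [Function.comp_def, ← nonsing_inv_eq_ringInverse, _root_.neg_apply,
    ContinuousLinearMap.mulLeftRight_apply, coe_units_inv, hx] at this
  exact this

theorem HasDerivAt.inv_mulVec [CompleteSpace 𝕜] [DecidableEq n] {A : 𝕜 → Matrix n n 𝕜}
    {A' : Matrix n n 𝕜} {b : 𝕜 → n → 𝕜} {b' : n → 𝕜} {t : 𝕜} (hA : HasDerivAt A A' t)
    (hb : HasDerivAt b b' t) (ht : IsUnit (A t).det) :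
    HasDerivAt (fun s ↦ (A s)⁻¹ *ᵥ b s) ((A t)⁻¹ *ᵥ (b' - A' *ᵥ ((A t)⁻¹ *ᵥ b t))) t := by
  refine ((Matrix.hasDerivAt_inv hA ht).matrix_mulVec hb).congr_deriv ?_
  rw [neg_mulVec, ← mulVec_mulVec, ← mulVec_mulVec, mulVec_sub]
  abel

open scoped Matrix.Norms.Elementwise in
theorem hasDerivAt_neg_inv_add_smul_mulVec [CompleteSpace 𝕜] [DecidableEq n]
    (M H : Matrix n n 𝕜) (m h : n → 𝕜) {u : 𝕜 → n → 𝕜}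
    (hu : ∀ s, u s = -((M + s • H)⁻¹ *ᵥ (m + s • h))) {t : 𝕜} (ht : IsUnit (M + t • H).det) :
    HasDerivAt u (-((M + t • H)⁻¹ *ᵥ (H *ᵥ u t + h))) t := by
  have hA : HasDerivAt (fun s ↦ M + s • H) H t :=
    (((hasDerivAt_id' t).smul_const H).const_add M).congr_deriv (one_smul _ _)
  have hb : HasDerivAt (fun s ↦ m + s • h) h t :=
    (((hasDerivAt_id' t).smul_const h).const_add m).congr_deriv (one_smul _ _)
  rw [hu t, funext hu, mulVec_neg, neg_add_eq_sub]
  exact (hA.inv_mulVec hb ht).neg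

end

/-- Derivative of the GTRS feasibility function `φ(λ) = u(λ)ᵀH u(λ) + 2hᵀu(λ)` with
`u(λ) = −(M + λH)⁻¹(m + λh)`: if `M + λ₀H` is invertible then
`φ′(λ₀) = −2 (H u(λ₀) + h)ᵀ (M + λ₀H)⁻¹ (H u(λ₀) + h)`; if moreover `M + λ₀H` is
symmetric positive definite then `φ′(λ₀) ≤ 0`. -/
theorem stmt8 {n : ℕ} (M H : Matrix (Fin n) (Fin n) ℝ) (hHsymm : H.IsSymm)
    (m h : Fin n → ℝ) (lam0 : ℝ)
    (u : ℝ → Fin n → ℝ) (hu : ∀ lam, u lam = -((M + lam • H)⁻¹ *ᵥ (m + lam • h)))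
    (φ : ℝ → ℝ) (hφ : ∀ lam, φ lam = u lam ⬝ᵥ (H *ᵥ u lam) + 2 * (h ⬝ᵥ u lam))
    (hinv : IsUnit (M + lam0 • H).det) :
    HasDerivAt φ
      (-2 * ((H *ᵥ u lam0 + h) ⬝ᵥ ((M + lam0 • H)⁻¹ *ᵥ (H *ᵥ u lam0 + h)))) lam0 ∧
    ((M + lam0 • H).PosDef →
      -2 * ((H *ᵥ u lam0 + h) ⬝ᵥ ((M + lam0 • H)⁻¹ *ᵥ (H *ᵥ u lam0 + h))) ≤ 0) := by
  have hu' := hasDerivAt_neg_inv_add_smul_mulVec M H m h hu hinv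
  have hφ' := hu'.dotProduct_mulVec_add_two_mul_dotProduct hHsymm h
  rw [← funext hφ, dotProduct_neg] at hφ'
  refine ⟨hφ'.congr_deriv (by ring), fun hPD ↦ ?_⟩
  have hnonneg := hPD.inv.posSemidef.dotProduct_mulVec_nonneg (H *ᵥ u lam0 + h)
  rw [star_trivial] at hnonneg
  linarith
end

section
/- Let M, H ∈ ℝ^{n×n} be symmetric, m, h ∈ ℝⁿ, u(λ) = −(M + λH)⁻¹(m + λh), and φ(λ) = u(λ)ᵀH u(λ) + 2hᵀu(λ). If λ₁ ≤ λ₂ and both M + λ₁H and M + λ₂H are positive definite, then φ(λ₂) ≤ φ(λ₁); i.e., φ is monotone nonincreasing on the interval where M + λH is positive definite. Consequently the bisection root search for φ(λ) = 0 over a bracket inside this interval is justified. -/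
open Matrix

/-!
For `λ` in the positive-definite interval, `u(λ)` minimizes the Lagrangian
`v ↦ p(v) + λ q(v)`, where `p(v) = vᵀMv + 2mᵀv` and `q(v) = vᵀHv + 2hᵀv = g(v)`, and
`φ(λ) = q(u(λ))`. Comparing the Lagrangians at `λ₁` and `λ₂` on the two minimizers and adding
the two inequalities gives `(λ₂ - λ₁)(q(u(λ₂)) - q(u(λ₁))) ≤ 0`.
-/

lemma le_of_forall_add_mul_le {α : Type*} (p q : α → ℝ) {t₁ t₂ : ℝ} {u₁ u₂ : α}
    (hu₁ : ∀ v, p u₁ + t₁ * q u₁ ≤ p v + t₁ * q v)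
    (hu₂ : ∀ v, p u₂ + t₂ * q u₂ ≤ p v + t₂ * q v) (ht : t₁ < t₂) :
    q u₂ ≤ q u₁ := by
  have key : (t₂ - t₁) * (q u₂ - q u₁) ≤ 0 := by linarith [hu₁ u₂, hu₂ u₁]
  nlinarith

namespace Matrix

variable {ι : Type*} [Fintype ι]

def quadForm (A : Matrix ι ι ℝ) (b v : ι → ℝ) : ℝ :=
  v ⬝ᵥ (A *ᵥ v) + 2 * (b ⬝ᵥ v)

lemma quadForm_add_smul (A B : Matrix ι ι ℝ) (a b v : ι → ℝ) (t : ℝ) :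
    quadForm (A + t • B) (a + t • b) v = quadForm A a v + t * quadForm B b v := by
  simp only [quadForm, add_mulVec, smul_mulVec, dotProduct_add, add_dotProduct,
    dotProduct_smul, smul_dotProduct, smul_eq_mul]
  ring

lemma PosSemidef.quadForm_le {A : Matrix ι ι ℝ} (hA : A.PosSemidef) {b u : ι → ℝ}
    (hu : A *ᵥ u = -b) (v : ι → ℝ) : quadForm A b u ≤ quadForm A b v := by
  have hsymm : (v - u) ⬝ᵥ (A *ᵥ u) = u ⬝ᵥ (A *ᵥ (v - u)) := by
    rw [dotProduct_comm, dotProduct_mulVec, ← mulVec_transpose,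
      (isHermitian_iff_isSymm.mp hA.isHermitian).eq]
  have expand : quadForm A b v - quadForm A b u = (v - u) ⬝ᵥ (A *ᵥ (v - u)) := by
    have hb : b = -(A *ᵥ u) := by rw [hu, neg_neg]
    simp only [quadForm, hb, mulVec_sub, dotProduct_sub, sub_dotProduct, neg_dotProduct,
      dotProduct_comm _ (A *ᵥ u)] at hsymm ⊢
    linarith
  have := hA.dotProduct_mulVec_nonneg (v - u)
  rw [star_trivial] at this
  linarith

lemma PosDef.mulVec_neg_inv_mulVec [DecidableEq ι] {A : Matrix ι ι ℝ} (hA : A.PosDef)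
    (b : ι → ℝ) : A *ᵥ -(A⁻¹ *ᵥ b) = -b := by
  rw [mulVec_neg, mulVec_mulVec, mul_nonsing_inv _ ((isUnit_iff_isUnit_det A).mp hA.isUnit),
    one_mulVec]

end Matrix

theorem stmt10_general {n : ℕ} (M H : Matrix (Fin n) (Fin n) ℝ)
    (m h : Fin n → ℝ)
    (u : ℝ → Fin n → ℝ) (hu : ∀ lam, u lam = -((M + lam • H)⁻¹ *ᵥ (m + lam • h)))
    (φ : ℝ → ℝ) (hφ : ∀ lam, φ lam = u lam ⬝ᵥ (H *ᵥ u lam) + 2 * (h ⬝ᵥ u lam))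
    (lam1 lam2 : ℝ) (hle : lam1 ≤ lam2)
    (h1 : (M + lam1 • H).PosDef) (h2 : (M + lam2 • H).PosDef) :
    φ lam2 ≤ φ lam1 := by
  obtain rfl | hlt := hle.eq_or_lt
  · rfl
  have hmin : ∀ lam, (M + lam • H).PosDef → ∀ v,
      quadForm M m (u lam) + lam * quadForm H h (u lam) ≤
        quadForm M m v + lam * quadForm H h v := by
    intro lam hpd v
    simp only [← quadForm_add_smul]
    exact hpd.posSemidef.quadForm_le (hu lam ▸ hpd.mulVec_neg_inv_mulVec _) v
  simp only [hφ]
  exact le_of_forall_add_mul_le (quadForm M m) (quadForm H h) (hmin lam1 h1) (hmin lam2 h2) hlt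

/-- Monotonicity of the GTRS feasibility function: with `u(λ) = −(M + λH)⁻¹(m + λh)` and
`φ(λ) = u(λ)ᵀH u(λ) + 2hᵀu(λ)`, if `λ₁ ≤ λ₂` and `M + λ₁H`, `M + λ₂H` are both positive
definite, then `φ(λ₂) ≤ φ(λ₁)`; i.e., `φ` is nonincreasing on the positive-definite
interval of the pencil, justifying the bisection root search for `φ(λ) = 0`. -/
theorem stmt10 {n : ℕ} (M H : Matrix (Fin n) (Fin n) ℝ)
    (hMsymm : M.IsSymm) (hHsymm : H.IsSymm) (m h : Fin n → ℝ)
    (u : ℝ → Fin n → ℝ) (hu : ∀ lam, u lam = -((M + lam • H)⁻¹ *ᵥ (m + lam • h)))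
    (φ : ℝ → ℝ) (hφ : ∀ lam, φ lam = u lam ⬝ᵥ (H *ᵥ u lam) + 2 * (h ⬝ᵥ u lam))
    (lam1 lam2 : ℝ) (hle : lam1 ≤ lam2)
    (h1 : (M + lam1 • H).PosDef) (h2 : (M + lam2 • H).PosDef) :
    φ lam2 ≤ φ lam1 :=
  stmt10_general M H m h u hu φ hφ lam1 lam2 hle h1 h2
end

section
/- The semidefinite program is a valid relaxation of the fixed-height R-LS problem: for every X = (x, y) ∈ ℝ², setting t_k = ‖X − ã_k‖₂, v̄ = (x, y, t₁, …, t_K, 1) ∈ ℝ^{K+3}, and Z = v̄v̄ᵀ, the matrix Z satisfies all SDP constraints — Z ⪰ 0, Z_{K+3,K+3} = 1, Z_{k+2,K+3} ≥ 0 for all k, the coupling equalities Z_{k+2,k+2} = Z_{1,1} + Z_{2,2} − 2ã_kᵀ(Z_{1,K+3}, Z_{2,K+3}) + ‖ã_k‖₂², and for all k₁ ≠ k₂, with d = ‖ã_{k₁} − ã_{k₂}‖₂, the inequalities Z_{k₁+2,k₁+2} + Z_{k₂+2,k₂+2} − 2Z_{k₁+2,k₂+2} ≤ d² and Z_{k₁+2,K+3}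 + Z_{k₂+2,K+3} ≥ d — and the SDP objective evaluated at Z equals the R-LS cost: Σ_{k=1}^K w_k (r_k² − 2r_k Z_{k+2,K+3} + Z_{k+2,k+2}) = J_RLS(x, y; z₀). Consequently, the optimal value of the SDP is at most the infimum of J_RLS(·; z₀) over ℝ². -/
open Matrix

/-!
The rank-one lift `v̄ v̄ᵀ` of `v̄ = (x, y, ‖X − ã₁‖, …, ‖X − ã_K‖, 1)` is feasible: the coupling
equalities expand `‖X − ã_k‖²` in coordinates, and the pairwise constraints are the reverse triangle
inequality and the triangle inequality for `X, ã_{k₁}, ã_{k₂}`; its objective is `J(X)` by expanding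
the square. On any feasible `Z` the objective is `∑ w_k (e_k − r_k e_{K+3})ᵀ Z (e_k − r_k e_{K+3}) ≥ 0`,
so the SDP values are bounded below and their infimum is a genuine one (not the junk `sInf = 0`).
-/

/-- Index type for the lifted SDP variable `Z ∈ ℝ^{(K+3)×(K+3)}`: the first two indices
correspond to the target coordinates `(x, y)`, the middle `K` indices to the predicted
ranges `t₁, …, t_K`, and the final index to the homogenizing entry `1`. -/
abbrev Idx (K : ℕ) := Fin 2 ⊕ Fin K ⊕ Fin 1

/-- The last (homogenizing) index, corresponding to index `K+3` in 1-based notation. -/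
def lastIdx (K : ℕ) : Idx K := Sum.inr (Sum.inr 0)

/-- The index `k+2` (1-based) corresponding to the predicted range `t_k`. -/
def tIdx {K : ℕ} (k : Fin K) : Idx K := Sum.inr (Sum.inl k)

theorem Matrix.PosSemidef.two_mul_mul_apply_le {n : Type*} [Fintype n] [DecidableEq n]
    {Z : Matrix n n ℝ} (hZ : Z.PosSemidef) (i j : n) (c : ℝ) :
    2 * c * Z i j ≤ Z i i + c ^ 2 * Z j j := by
  have hquad := hZ.dotProduct_mulVec_nonneg (Pi.single i 1 - Pi.single j c)
  have hsymm : Z j i = Z i j := by simpa using congrFun (congrFun hZ.1 i) j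
  simp only [star_trivial, mulVec_sub, dotProduct_sub, sub_dotProduct, mulVec_single,
    single_dotProduct, Pi.smul_apply, op_smul_eq_mul, col_apply, hsymm] at hquad
  nlinarith

theorem sq_norm_sub_sub_norm_sub_le {E : Type*} [SeminormedAddCommGroup E] (x a b : E) :
    (‖x - a‖ - ‖x - b‖) ^ 2 ≤ ‖a - b‖ ^ 2 := by
  have h := abs_dist_sub_le a b x
  rw [dist_comm a x, dist_comm b x] at h
  simpa only [dist_eq_norm, sq_abs] using pow_le_pow_left₀ (abs_nonneg _) h 2

theorem EuclideanSpace.norm_sub_sq_fin_two (X a : EuclideanSpace ℝ (Fin 2)) :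
    ‖X - a‖ ^ 2 = X 0 * X 0 + X 1 * X 1 - 2 * (a 0 * X 0 + a 1 * X 1) + ‖a‖ ^ 2 := by
  simp only [EuclideanSpace.norm_sq_eq, Fin.sum_univ_two, Real.norm_eq_abs, sq_abs,
    PiLp.sub_apply]
  ring

theorem csInf_image_le_ciInf {α β γ : Type*} [ConditionallyCompleteLattice γ] [Nonempty β]
    {f : α → γ} {s : Set α} {g : β → γ} (hf : BddBelow (f '' s))
    (hg : ∀ b, ∃ a ∈ s, f a = g b) : sInf (f '' s) ≤ ⨅ b, g b :=
  le_ciInf fun b => by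
    obtain ⟨a, ha, hab⟩ := hg b
    exact hab ▸ csInf_le hf (Set.mem_image_of_mem f ha)

noncomputable section

namespace FixedHeightRLS

variable {K : ℕ} (atil : Fin K → EuclideanSpace ℝ (Fin 2)) (r w : Fin K → ℝ)

def cost (X : EuclideanSpace ℝ (Fin 2)) : ℝ :=
  ∑ k, w k * (‖X - atil k‖ - r k) ^ 2

def lift (X : EuclideanSpace ℝ (Fin 2)) : Idx K → ℝ :=
  Sum.elim ![X 0, X 1] (Sum.elim (fun k => ‖X - atil k‖) fun _ => (1 : ℝ))

def sdpObjective (Z : Matrix (Idx K) (Idx K) ℝ) : ℝ :=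
  ∑ k, w k * ((r k) ^ 2 - 2 * r k * Z (tIdx k) (lastIdx K) + Z (tIdx k) (tIdx k))

def IsSDPFeasible (Z : Matrix (Idx K) (Idx K) ℝ) : Prop :=
  Z.PosSemidef ∧
  Z (lastIdx K) (lastIdx K) = 1 ∧
  (∀ k, 0 ≤ Z (tIdx k) (lastIdx K)) ∧
  (∀ k, Z (tIdx k) (tIdx k) =
    Z (Sum.inl 0) (Sum.inl 0) + Z (Sum.inl 1) (Sum.inl 1) -
      2 * (atil k 0 * Z (Sum.inl 0) (lastIdx K) +
           atil k 1 * Z (Sum.inl 1) (lastIdx K)) + ‖atil k‖ ^ 2) ∧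
  (∀ k1 k2, k1 ≠ k2 →
    Z (tIdx k1) (tIdx k1) + Z (tIdx k2) (tIdx k2) - 2 * Z (tIdx k1) (tIdx k2) ≤
      ‖atil k1 - atil k2‖ ^ 2 ∧
    ‖atil k1 - atil k2‖ ≤ Z (tIdx k1) (lastIdx K) + Z (tIdx k2) (lastIdx K))

variable {atil} (X : EuclideanSpace ℝ (Fin 2))

@[simp] theorem lift_inl (i : Fin 2) : lift atil X (Sum.inl i) = X i := by
  fin_cases i <;> rfl

@[simp] theorem lift_tIdx (k : Fin K) : lift atil X (tIdx k) = ‖X - atil k‖ := rfl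

@[simp] theorem lift_lastIdx : lift atil X (lastIdx K) = 1 := rfl

theorem isSDPFeasible_vecMulVec_lift :
    IsSDPFeasible atil (vecMulVec (lift atil X) (lift atil X)) := by
  simp only [IsSDPFeasible, vecMulVec_apply, lift_inl, lift_tIdx, lift_lastIdx, mul_one]
  refine ⟨by simpa using posSemidef_vecMulVec_self_star (lift atil X), trivial,
    fun k => norm_nonneg _, fun k => ?_, fun k1 k2 _ => ⟨?_, ?_⟩⟩
  · rw [← sq, EuclideanSpace.norm_sub_sq_fin_two]
  · nlinarith [sq_norm_sub_sub_norm_sub_le X (atil k1) (atil k2)]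
  · simpa only [norm_sub_rev] using norm_sub_le_norm_sub_add_norm_sub (atil k1) X (atil k2)

theorem sdpObjective_vecMulVec_lift :
    sdpObjective r w (vecMulVec (lift atil X) (lift atil X)) = cost atil r w X := by
  refine Finset.sum_congr rfl fun k _ => ?_
  simp only [vecMulVec_apply, lift_tIdx, lift_lastIdx]
  ring

variable {r w}

theorem sdpObjective_nonneg (hw : ∀ k, 0 ≤ w k) {Z : Matrix (Idx K) (Idx K) ℝ}
    (hZ : Z.PosSemidef) (hlast : Z (lastIdx K) (lastIdx K) = 1) : 0 ≤ sdpObjective r w Z :=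
  Finset.sum_nonneg fun k _ => mul_nonneg (hw k) <| by
    have := hZ.two_mul_mul_apply_le (tIdx k) (lastIdx K) (r k)
    rw [hlast] at this
    nlinarith

theorem lift_feasible_and_sInf_sdpObjective_le_iInf_cost (hw : ∀ k, 0 ≤ w k) :
    (∀ X, IsSDPFeasible atil (vecMulVec (lift atil X) (lift atil X)) ∧
      sdpObjective r w (vecMulVec (lift atil X) (lift atil X)) = cost atil r w X) ∧
    sInf (sdpObjective r w '' {Z | IsSDPFeasible atil Z}) ≤ ⨅ X, cost atil r w X := by
  have hlift X : IsSDPFeasible atil (vecMulVec (lift atil X) (lift atil X)) ∧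
      sdpObjective r w (vecMulVec (lift atil X) (lift atil X)) = cost atil r w X :=
    ⟨isSDPFeasible_vecMulVec_lift X, sdpObjective_vecMulVec_lift r w X⟩
  have hbdd : BddBelow (sdpObjective r w '' {Z | IsSDPFeasible atil Z}) :=
    ⟨0, by
      rintro _ ⟨Z, hZ, rfl⟩
      exact sdpObjective_nonneg hw hZ.1 hZ.2.1⟩
  exact ⟨hlift, csInf_image_le_ciInf hbdd fun X => ⟨_, (hlift X).1, (hlift X).2⟩⟩

end FixedHeightRLS

end

/-- The SDP is a valid relaxation of the fixed-height R-LS problem: for every target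
position `X = (x, y) ∈ ℝ²`, the rank-one lift `Z = v̄v̄ᵀ` of the augmented vector
`v̄ = (x, y, t₁, …, t_K, 1)` with `t_k = ‖X − ã_k‖₂` satisfies all SDP constraints, and the
SDP objective at `Z` equals the R-LS cost `J_RLS(x, y; z₀)`. Consequently, the optimal
value of the SDP is at most the infimum of `J_RLS(·; z₀)` over ℝ². -/
theorem stmt15 (K : ℕ) (atil : Fin K → EuclideanSpace ℝ (Fin 2))
    (r w : Fin K → ℝ) (hw : ∀ k, 0 < w k)
    (J : EuclideanSpace ℝ (Fin 2) → ℝ)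
    (hJ : ∀ X, J X = ∑ k, w k * (‖X - atil k‖ - r k) ^ 2)
    (Obj : Matrix (Idx K) (Idx K) ℝ → ℝ)
    (hObj : ∀ Z, Obj Z = ∑ k, w k *
      ((r k) ^ 2 - 2 * r k * Z (tIdx k) (lastIdx K) + Z (tIdx k) (tIdx k)))
    (Feas : Matrix (Idx K) (Idx K) ℝ → Prop)
    (hFeas : ∀ Z, Feas Z ↔
      Z.PosSemidef ∧
      Z (lastIdx K) (lastIdx K) = 1 ∧
      (∀ k, 0 ≤ Z (tIdx k) (lastIdx K)) ∧
      (∀ k, Z (tIdx k) (tIdx k) =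
        Z (Sum.inl 0) (Sum.inl 0) + Z (Sum.inl 1) (Sum.inl 1) -
          2 * (atil k 0 * Z (Sum.inl 0) (lastIdx K) +
               atil k 1 * Z (Sum.inl 1) (lastIdx K)) + ‖atil k‖ ^ 2) ∧
      (∀ k1 k2, k1 ≠ k2 →
        Z (tIdx k1) (tIdx k1) + Z (tIdx k2) (tIdx k2) - 2 * Z (tIdx k1) (tIdx k2) ≤
          ‖atil k1 - atil k2‖ ^ 2 ∧
        ‖atil k1 - atil k2‖ ≤ Z (tIdx k1) (lastIdx K) + Z (tIdx k2) (lastIdx K)))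
    (vbar : EuclideanSpace ℝ (Fin 2) → Idx K → ℝ)
    (hvbar : ∀ X, vbar X =
      Sum.elim ![X 0, X 1] (Sum.elim (fun k => ‖X - atil k‖) fun _ => (1 : ℝ))) :
    (∀ X : EuclideanSpace ℝ (Fin 2),
      Feas (vecMulVec (vbar X) (vbar X)) ∧
      Obj (vecMulVec (vbar X) (vbar X)) = J X) ∧
    sInf (Obj '' {Z | Feas Z}) ≤ ⨅ X : EuclideanSpace ℝ (Fin 2), J X := by
  obtain rfl : J = FixedHeightRLS.cost atil r w := funext hJ
  obtain rfl : Obj = FixedHeightRLS.sdpObjective r w := funext hObj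
  obtain rfl : Feas = FixedHeightRLS.IsSDPFeasible atil := funext fun Z => propext (hFeas Z)
  obtain rfl : vbar = FixedHeightRLS.lift atil := funext hvbar
  exact FixedHeightRLS.lift_feasible_and_sInf_sdpObjective_le_iInf_cost fun k => (hw k).le
end
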